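/- Let d = p^r with p prime. If a quantum state ρ lies in the real span of the KD-classical pure-state projections and ρ is KD-classical (all KD quasiprobabilities nonnegative), then ρ lies in the convex hull of the KD-classical pure-state projections: KD^+_{A,B} ∩ span_ℝ(pure(KD^+_{A,B})) = conv(pure(KD^+_{A,B})). -/

import Mathlib

open Finset Complex
open scoped ComplexOrder

/-- ω_n = e^{2πi/n} -/
noncomputable def ww (n : ℕ) : ℂ := Complex.exp (2 * Real.pi * Complex.I / n)

/-- |ψ_{m,s}⟩ = (1/√x) ∑_{k<x} ω_x^{sk} |a_{ky+m}⟩ in ℂ^d (standard basis coords). -/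
noncomputable def psi (d x y m s : ℕ) : Fin d → ℂ :=
  fun t => (1 / Real.sqrt x) *
    ∑ k ∈ Finset.range x, ww x ^ (s * k) * (if (t : ℕ) = k * y + m then 1 else 0)

/-- Fourier basis vector |b_j⟩, coordinates in the standard basis. -/
noncomputable def bvec (d j : ℕ) : Fin d → ℂ :=
  fun i => ww d ^ ((i : ℕ) * j) / Real.sqrt d

/-- rank one projection |v⟩⟨v| as a matrix. -/
noncomputable def proj {d : ℕ} (v : Fin d → ℂ) : Matrix (Fin d) (Fin d) ℂ :=
  fun i j => v i * (starRingEnd ℂ) (v j)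

/-- KD quasiprobability Q_{ij}(ρ) = ⟨a_i|ρ|b_j⟩⟨b_j|a_i⟩ (standard/Fourier bases). -/
noncomputable def KD {d : ℕ} (ρ : Matrix (Fin d) (Fin d) ℂ) (i j : Fin d) : ℂ :=
  (∑ l, ρ i l * bvec d (j : ℕ) l) * (starRingEnd ℂ) (bvec d (j : ℕ) i)

/-- The set of KD-classical pure-state projections for the DFT pair in dimension d. -/
def pureKD (d : ℕ) : Set (Matrix (Fin d) (Fin d) ℂ) :=
  {M | ∃ x y m s : ℕ, x * y = d ∧ m < y ∧ s < x ∧ M = proj (psi d x y m s)}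

/-!
For `d = p ^ r` the factorisations `d = x * y` are `x = p ^ a`, `y = p ^ (r - a)`, and the KD
distribution of the pure state `ψ_{ms}` is `1 / d` times the indicator of
`{i ≡ m [MOD p ^ (r - a)]} × {j ≡ s [MOD p ^ a]}`.
A real combination of these states thus has KD distribution
`(1 / d) ∑_a g a (i % p ^ (r - a)) (j % p ^ a)`, and the core of the proof is combinatorial: a sum
of this shape that is nonnegative everywhere can be rewritten with nonnegative coefficients.
Since the KD map is injective, the state is then the corresponding nonnegative combination, and
its trace makes the combination convex.
-/

lemma isPrimitiveRoot_ww {n : ℕ} (hn : n ≠ 0) : IsPrimitiveRoot (ww n) n :=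
  Complex.isPrimitiveRoot_exp n hn

lemma norm_ww (n : ℕ) : ‖ww n‖ = 1 := by
  rw [ww, Complex.norm_exp]
  simp [Complex.div_re]

lemma ww_ne_zero (n : ℕ) : ww n ≠ 0 :=
  norm_ne_zero_iff.mp (by simp [norm_ww])

lemma conj_ww_pow (n k : ℕ) : starRingEnd ℂ (ww n ^ k) = (ww n ^ k)⁻¹ := by
  rw [← Complex.inv_eq_conj (by simp [norm_ww])]

lemma ww_pow_mul_conj (n k : ℕ) : ww n ^ k * starRingEnd ℂ (ww n ^ k) = 1 := by
  rw [conj_ww_pow, mul_inv_cancel₀ (pow_ne_zero _ (ww_ne_zero n))]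

lemma ww_pow_eq_ww_pow_iff {n a b : ℕ} (hn : n ≠ 0) :
    ww n ^ a = ww n ^ b ↔ a % n = b % n := by
  have hζ := isPrimitiveRoot_ww hn
  rw [(hζ.isOfFinOrder hn).pow_inj_mod, ← hζ.eq_orderOf]

lemma ww_mul_pow_right {x y : ℕ} (hx : x ≠ 0) (hy : y ≠ 0) : ww (x * y) ^ y = ww x := by
  rw [ww, ww, ← Complex.exp_nat_mul]
  congr 1
  push_cast
  field_simp

lemma sum_ww_pow_mul_conj {x : ℕ} (hx : x ≠ 0) (j s : ℕ) :
    ∑ k ∈ range x, ww x ^ (j * k) * starRingEnd ℂ (ww x ^ (s * k)) =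
      if j % x = s % x then (x : ℂ) else 0 := by
  have hs : ww x ^ s ≠ 0 := pow_ne_zero _ (ww_ne_zero x)
  set μ := ww x ^ j * (ww x ^ s)⁻¹
  have hterm (k : ℕ) : ww x ^ (j * k) * starRingEnd ℂ (ww x ^ (s * k)) = μ ^ k := by
    rw [conj_ww_pow, mul_pow, pow_mul, pow_mul, inv_pow]
  simp only [hterm]
  split_ifs with h
  · have hμ : μ = 1 := by rw [mul_inv_eq_one₀ hs, ww_pow_eq_ww_pow_iff hx, h]
    simp [hμ]
  · have hμ : μ ≠ 1 := by rwa [ne_eq, mul_inv_eq_one₀ hs, ww_pow_eq_ww_pow_iff hx]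
    have hμx : μ ^ x = 1 := by
      rw [mul_pow, inv_pow, ← pow_mul, ← pow_mul, mul_comm j, mul_comm s, pow_mul, pow_mul,
        (isPrimitiveRoot_ww hx).pow_eq_one, one_pow, one_pow, inv_one, mul_one]
    rw [geom_sum_eq hμ, hμx, sub_self, zero_div]

lemma sum_fin_ite_mod_eq {M : Type*} [AddCommMonoid M] {x y m : ℕ} (hm : m < y) (F : ℕ → M) :
    ∑ t : Fin (x * y), (if (t : ℕ) % y = m then F t else 0) =
      ∑ k ∈ range x, F (k * y + m) := by
  rw [Fin.sum_univ_eq_sum_range (fun l => if l % y = m then F l else 0)]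
  induction x with
  | zero => simp
  | succ x ih =>
    rw [add_mul, one_mul, sum_range_add, ih, sum_range_succ]
    congr 1
    rw [← sum_ite_eq_of_mem' (range y) m (fun r => F (x * y + r)) (mem_range.mpr hm)]
    refine sum_congr rfl fun r hr => ?_
    rw [Nat.mul_add_mod', Nat.mod_eq_of_lt (mem_range.mp hr), eq_comm]

lemma psi_apply {d x y m s : ℕ} (hd : x * y = d) (hm : m < y) (t : Fin d) :
    psi d x y m s t =
      if (t : ℕ) % y = m then 1 / (Real.sqrt x : ℂ) * ww x ^ (s * ((t : ℕ) / y)) else 0 := by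
  have hy : 0 < y := by omega
  have hlt : (t : ℕ) / y < x := Nat.div_lt_of_lt_mul (by rw [mul_comm, hd]; exact t.isLt)
  have hcond (k : ℕ) : ((t : ℕ) = k * y + m) ↔ ((t : ℕ) % y = m ∧ (t : ℕ) / y = k) := by
    rw [and_comm, Nat.div_mod_unique hy]
    exact ⟨fun h => ⟨by rw [h]; ring, hm⟩, fun ⟨h, _⟩ => by rw [← h]; ring⟩
  simp only [psi, hcond]
  split_ifs with h <;> simp [h, hlt]

lemma ww_mul_pow_mul_add {x y : ℕ} (hx : x ≠ 0) (hy : y ≠ 0) (k m j : ℕ) :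
    ww (x * y) ^ ((k * y + m) * j) = ww x ^ (j * k) * ww (x * y) ^ (m * j) := by
  rw [show (k * y + m) * j = y * (j * k) + m * j by ring, pow_add, pow_mul, ww_mul_pow_right hx hy]

lemma psi_inner_bvec {d x y m s : ℕ} (hd : x * y = d) (hm : m < y) (hs : s < x) (j : Fin d) :
    ∑ l, starRingEnd ℂ (psi d x y m s l) * bvec d j l =
      if (j : ℕ) % x = s then
        (x : ℂ) / ((Real.sqrt x : ℂ) * (Real.sqrt d : ℂ)) * ww d ^ (m * (j : ℕ))
      else 0 := by
  subst hd
  have hx : x ≠ 0 := by omega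
  have hy : y ≠ 0 := by omega
  let F (l : ℕ) : ℂ := 1 / (Real.sqrt x : ℂ) * starRingEnd ℂ (ww x ^ (s * (l / y))) *
    (ww (x * y) ^ (l * (j : ℕ)) / Real.sqrt (x * y : ℕ))
  have hterm (l : Fin (x * y)) : starRingEnd ℂ (psi (x * y) x y m s l) * bvec (x * y) j l =
      if (l : ℕ) % y = m then F l else 0 := by
    rw [psi_apply rfl hm, bvec]
    split_ifs <;> simp [F]
  have hsummand (k : ℕ) : F (k * y + m) =
      1 / ((Real.sqrt x : ℂ) * Real.sqrt (x * y : ℕ)) * ww (x * y) ^ (m * (j : ℕ)) *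
        (ww x ^ ((j : ℕ) * k) * starRingEnd ℂ (ww x ^ (s * k))) := by
    simp only [F]
    have hdiv : (k * y + m) / y = k := by
      rw [add_comm, Nat.add_mul_div_right _ _ (Nat.pos_of_ne_zero hy), Nat.div_eq_of_lt hm,
        zero_add]
    rw [hdiv, ww_mul_pow_mul_add hx hy]
    ring
  rw [sum_congr rfl fun l _ => hterm l, sum_fin_ite_mod_eq hm F,
    sum_congr rfl fun k _ => hsummand k, ← mul_sum, sum_ww_pow_mul_conj hx, Nat.mod_eq_of_lt hs]
  split_ifs
  · ring
  · simp

lemma KD_proj {d : ℕ} (v : Fin d → ℂ) (i j : Fin d) :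
    KD (proj v) i j =
      v i * (∑ l, starRingEnd ℂ (v l) * bvec d j l) * starRingEnd ℂ (bvec d j i) := by
  simp only [KD, proj, mul_sum, mul_assoc]

lemma KD_proj_psi {d x y m s : ℕ} (hd : x * y = d) (hm : m < y) (hs : s < x) (i j : Fin d) :
    KD (proj (psi d x y m s)) i j =
      if (i : ℕ) % y = m ∧ (j : ℕ) % x = s then 1 / (d : ℂ) else 0 := by
  rw [KD_proj, psi_inner_bvec hd hm hs, psi_apply hd hm]
  by_cases hi : (i : ℕ) % y = m; swap
  · simp [hi]
  by_cases hj : (j : ℕ) % x = s; swap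
  · simp [hj]
  subst hd
  have hx : x ≠ 0 := by omega
  have hy : y ≠ 0 := by omega
  set k := (i : ℕ) / y
  have hphase : ww (x * y) ^ ((i : ℕ) * j) = ww x ^ (s * k) * ww (x * y) ^ (m * (j : ℕ)) := by
    rw [← Nat.div_add_mod (i : ℕ) y, hi, mul_comm y, ww_mul_pow_mul_add hx hy,
      (ww_pow_eq_ww_pow_iff hx).mpr (Nat.ModEq.mul_right k (hj.trans (Nat.mod_eq_of_lt hs).symm))]
  have hsqrt (n : ℕ) : (Real.sqrt n : ℂ) ^ 2 = n := by
    rw [← Complex.ofReal_pow, Real.sq_sqrt n.cast_nonneg, Complex.ofReal_natCast]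
  have hxC : (x : ℂ) ≠ 0 := Nat.cast_ne_zero.mpr hx
  simp only [hi, hj, and_self, if_true, bvec, map_div₀, Complex.conj_ofReal, hphase, map_mul]
  calc _ = (ww x ^ (s * k) * starRingEnd ℂ (ww x ^ (s * k))) *
        (ww (x * y) ^ (m * (j : ℕ)) * starRingEnd ℂ (ww (x * y) ^ (m * (j : ℕ)))) *
        (x / ((Real.sqrt x : ℂ) ^ 2 * (Real.sqrt (x * y : ℕ) : ℂ) ^ 2)) := by ring
    _ = 1 / ((x * y : ℕ) : ℂ) := by
      rw [ww_pow_mul_conj, ww_pow_mul_conj, hsqrt, hsqrt]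
      field_simp

lemma trace_proj_psi {d x y m s : ℕ} (hd : x * y = d) (hm : m < y) (hs : s < x) :
    (proj (psi d x y m s)).trace = 1 := by
  subst hd
  have hxC : (x : ℂ) ≠ 0 := Nat.cast_ne_zero.mpr (by omega)
  have hdiag (t : Fin (x * y)) :
      proj (psi (x * y) x y m s) t t = if (t : ℕ) % y = m then 1 / (x : ℂ) else 0 := by
    rw [proj, psi_apply rfl hm]
    split_ifs
    · rw [map_mul, mul_mul_mul_comm, ww_pow_mul_conj, map_div₀, map_one, Complex.conj_ofReal,
        ← pow_two, div_pow, ← Complex.ofReal_pow, Real.sq_sqrt (Nat.cast_nonneg x)]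
      simp
    · simp
  simp only [Matrix.trace, Matrix.diag, hdiag]
  rw [sum_fin_ite_mod_eq hm (fun _ => 1 / (x : ℂ)), sum_const, card_range, nsmul_eq_mul,
    mul_one_div_cancel hxC]

lemma posSemidef_proj {d : ℕ} (v : Fin d → ℂ) : (proj v).PosSemidef :=
  Matrix.posSemidef_vecMulVec_self_star v

noncomputable def kdLinearMap (d : ℕ) (i j : Fin d) :
    Matrix (Fin d) (Fin d) ℂ →ₗ[ℂ] ℂ where
  toFun ρ := KD ρ i j
  map_add' ρ σ := by simp only [KD, Matrix.add_apply, add_mul, sum_add_distrib]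
  map_smul' c ρ := by simp only [KD, Matrix.smul_apply, smul_eq_mul, mul_assoc, ← mul_sum]; rfl

lemma KD_sum_smul {d : ℕ} {ι : Type*} (T : Finset ι) (c : ι → ℝ)
    (M : ι → Matrix (Fin d) (Fin d) ℂ) (i j : Fin d) :
    KD (∑ t ∈ T, c t • M t) i j = ∑ t ∈ T, c t • KD (M t) i j := by
  change kdLinearMap d i j _ = _
  simp only [map_sum, LinearMap.map_smul_of_tower]
  rfl

lemma KD_add_smul {d : ℕ} (a b : ℝ) (ρ σ : Matrix (Fin d) (Fin d) ℂ) (i j : Fin d) :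
    KD (a • ρ + b • σ) i j = a • KD ρ i j + b • KD σ i j := by
  change kdLinearMap d i j _ = _
  simp only [map_add, LinearMap.map_smul_of_tower]
  rfl

noncomputable def fourierMatrix (d : ℕ) : Matrix (Fin d) (Fin d) ℂ :=
  Matrix.of fun l j => bvec d j l

lemma isUnit_fourierMatrix {d : ℕ} (hd : d ≠ 0) : IsUnit (fourierMatrix d) := by
  have hF : fourierMatrix d = ((Real.sqrt d : ℂ))⁻¹ •
      Matrix.vandermonde (fun l : Fin d => ww d ^ (l : ℕ)) := by
    ext l j
    simp [fourierMatrix, Matrix.vandermonde, bvec, ← pow_mul, div_eq_inv_mul]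
  have hinj : Function.Injective (fun l : Fin d => ww d ^ (l : ℕ)) := fun l l' h =>
    Fin.ext ((isPrimitiveRoot_ww hd).pow_inj l.isLt l'.isLt h)
  rw [Matrix.isUnit_iff_isUnit_det, hF, Matrix.det_smul, isUnit_iff_ne_zero]
  exact mul_ne_zero (by simp [hd]) (Matrix.det_vandermonde_ne_zero_iff.mpr hinj)

lemma KD_eq_mul_fourierMatrix {d : ℕ} (ρ : Matrix (Fin d) (Fin d) ℂ) (i j : Fin d) :
    KD ρ i j = (ρ * fourierMatrix d) i j * starRingEnd ℂ (bvec d j i) :=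
  rfl

lemma eq_of_forall_KD_eq {d : ℕ} {ρ σ : Matrix (Fin d) (Fin d) ℂ}
    (h : ∀ i j, KD ρ i j = KD σ i j) : ρ = σ := by
  rcases eq_or_ne d 0 with rfl | hd
  · exact Subsingleton.elim ρ σ
  have hbvec (i j : Fin d) : starRingEnd ℂ (bvec d j i) ≠ 0 := by
    simp [bvec, ww_ne_zero, hd]
  refine (isUnit_fourierMatrix hd).mul_right_cancel (Matrix.ext fun i j => ?_)
  exact mul_right_cancel₀ (hbvec i j)
    (by rw [← KD_eq_mul_fourierMatrix, ← KD_eq_mul_fourierMatrix, h])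

def levelSum (p r : ℕ) (g : ℕ → ℕ → ℕ → ℝ) (i j : ℕ) : ℝ :=
  ∑ a ∈ range (r + 1), g a (i % p ^ (r - a)) (j % p ^ a)

section levelSum

variable {p r : ℕ}

lemma levelSum_congr_left (g : ℕ → ℕ → ℕ → ℝ) {i i' : ℕ} (h : i % p ^ r = i' % p ^ r)
    (j : ℕ) :
    levelSum p r g i j = levelSum p r g i' j := by
  refine sum_congr rfl fun a _ => ?_
  have hdvd : p ^ (r - a) ∣ p ^ r := pow_dvd_pow p (Nat.sub_le r a)
  rw [← Nat.mod_mod_of_dvd i hdvd, h, Nat.mod_mod_of_dvd i' hdvd]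

lemma levelSum_mod (g : ℕ → ℕ → ℕ → ℝ) (i j : ℕ) :
    levelSum p r g i j = levelSum p r g (i % p ^ r) (j % p ^ r) := by
  rw [levelSum_congr_left g (Nat.mod_mod i (p ^ r)).symm]
  refine sum_congr rfl fun a ha => ?_
  rw [Nat.mod_mod_of_dvd j (pow_dvd_pow p (Nat.lt_succ_iff.mp (mem_range.mp ha)))]

lemma mod_pow_succ_of_lt {c : ℕ} (hc : c < p) (a j : ℕ) :
    (c + p * j) % p ^ (a + 1) = c + p * (j % p ^ a) := by
  rw [pow_succ', Nat.mod_mul, Nat.add_mul_mod_self_left, Nat.mod_eq_of_lt hc,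
    Nat.add_mul_div_left _ _ (by omega), Nat.div_eq_of_lt hc, zero_add]

lemma levelSum_succ (g : ℕ → ℕ → ℕ → ℝ) {c : ℕ} (hc : c < p) (i j : ℕ) :
    levelSum p (r + 1) g i (c + p * j) =
      g 0 (i % p ^ (r + 1)) 0 + levelSum p r (fun a m s => g (a + 1) m (c + p * s)) i j := by
  rw [levelSum, sum_range_succ', add_comm]
  simp only [levelSum, Nat.sub_zero, pow_zero, Nat.mod_one, Nat.add_sub_add_right,
    mod_pow_succ_of_lt hc]

lemma levelSum_add_levelZero (g : ℕ → ℕ → ℕ → ℝ) (G : ℕ → ℝ) (i j : ℕ) :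
    levelSum p r (fun a m s => g a m s + if a = 0 then G m else 0) i j =
      levelSum p r g i j + G (i % p ^ r) := by
  simp only [levelSum, sum_add_distrib, sum_ite_eq', mem_range, Nat.zero_lt_succ, if_true,
    Nat.sub_zero]

lemma exists_min_over_lifts (hp : 0 < p) (f : ℕ → ℝ) :
    ∃ G : ℕ → ℝ, (∀ i, G (i % p ^ r) ≤ f (i % p ^ (r + 1))) ∧
      ∀ i, ∃ i', i' % p ^ r = i % p ^ r ∧ G (i % p ^ r) = f (i' % p ^ (r + 1)) := by
  have hlift (m t : ℕ) (ht : t < p) :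
      (m % p ^ r + p ^ r * t) % p ^ (r + 1) = m % p ^ r + p ^ r * t := by
    rw [Nat.mod_pow_succ, Nat.add_mul_mod_self_left, Nat.mod_mod,
      Nat.add_mul_div_left _ _ (pow_pos hp r), Nat.div_eq_of_lt (Nat.mod_lt _ (pow_pos hp r)),
      zero_add, Nat.mod_eq_of_lt ht]
  have hne : (range p).Nonempty := nonempty_range_iff.mpr (by omega)
  refine ⟨fun m => (range p).inf' hne fun t => f (m % p ^ r + p ^ r * t), fun i => ?_,
    fun i => ?_⟩
  · dsimp only
    rw [Nat.mod_pow_succ (b := p), Nat.mod_mod]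
    exact inf'_le _ (mem_range.mpr (Nat.mod_lt _ hp))
  · obtain ⟨t, ht, hmin⟩ := exists_mem_eq_inf' hne fun t => f (i % p ^ r % p ^ r + p ^ r * t)
    refine ⟨i % p ^ r + p ^ r * t, by rw [Nat.add_mul_mod_self_left, Nat.mod_mod], ?_⟩
    dsimp only
    rw [hmin, Nat.mod_mod, hlift i t (mem_range.mp ht)]

end levelSum

/-- Induction on `r`, splitting `j` by its residue `c` mod `p`. The level-`0` coefficients, a
function of `i mod p ^ (r + 1)`, are lowered to their minimum `G` over the `p` lifts of
`i mod p ^ r`; `G` is moved to level `0` of the `p` subproblems of depth `r`, one for each `c`, and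
these stay nonnegative because the minimum `G` is attained. -/
lemma exists_nonneg_levelSum_eq {p : ℕ} (hp : 1 < p) (r : ℕ) (g : ℕ → ℕ → ℕ → ℝ)
    (hg : ∀ i j, 0 ≤ levelSum p r g i j) :
    ∃ g' : ℕ → ℕ → ℕ → ℝ, (∀ a m s, 0 ≤ g' a m s) ∧
      ∀ i j, levelSum p r g' i j = levelSum p r g i j := by
  induction r generalizing g with
  | zero =>
    refine ⟨fun _ _ _ => g 0 0 0, fun _ _ _ => by simpa [levelSum] using hg 0 0, fun i j => ?_⟩
    simp [levelSum, Nat.mod_one]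
  | succ r ih =>
    have hp0 : 0 < p := by omega
    obtain ⟨G, hGle, hGmin⟩ := exists_min_over_lifts (r := r) hp0 fun i => g 0 i 0
    let h (c : ℕ) : ℕ → ℕ → ℕ → ℝ := fun a m s =>
      g (a + 1) m (c + p * s) + if a = 0 then G m else 0
    have hsplit {c : ℕ} (hc : c < p) (i j : ℕ) : levelSum p (r + 1) g i (c + p * j) =
        (g 0 (i % p ^ (r + 1)) 0 - G (i % p ^ r)) + levelSum p r (h c) i j := by
      rw [levelSum_succ g hc, levelSum_add_levelZero]
      ring
    have hh (c : Fin p) (i j : ℕ) : 0 ≤ levelSum p r (h c) i j := by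
      obtain ⟨i', hi', hG⟩ := hGmin i
      have := hsplit c.isLt i' j
      rw [hi', ← hG, sub_self, zero_add, levelSum_congr_left _ hi'] at this
      exact this ▸ hg _ _
    choose h' hh'0 hh' using fun c : Fin p => ih (h c) (hh c)
    let g' : ℕ → ℕ → ℕ → ℝ
      | 0, m, _ => g 0 (m % p ^ (r + 1)) 0 - G (m % p ^ r)
      | a + 1, m, s => h' ⟨s % p, Nat.mod_lt s hp0⟩ a m (s / p)
    have hg'shift (c : Fin p) : (fun a m s => g' (a + 1) m (c + p * s)) = h' c := by
      funext a m s
      simp only [g', Nat.add_mul_mod_self_left, Nat.mod_eq_of_lt c.isLt,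
        Nat.add_mul_div_left _ _ hp0, Nat.div_eq_of_lt c.isLt, zero_add]
    refine ⟨g', fun a m s => ?_, fun i j => ?_⟩
    · cases a with
      | zero => exact sub_nonneg.mpr (hGle m)
      | succ a => exact hh'0 _ _ _ _
    · rw [← Nat.mod_add_div j p, levelSum_succ g' (Nat.mod_lt j hp0), hsplit (Nat.mod_lt j hp0),
        hg'shift ⟨j % p, Nat.mod_lt j hp0⟩, hh']
      simp only [g', Nat.mod_mod,
        Nat.mod_mod_of_dvd i (pow_dvd_pow p (Nat.le_succ r))]

def levelIndex (p r : ℕ) : Finset (Σ _ : ℕ, ℕ × ℕ) :=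
  (range (r + 1)).sigma fun a => range (p ^ (r - a)) ×ˢ range (p ^ a)

noncomputable def levelProj (p r : ℕ) (t : Σ _ : ℕ, ℕ × ℕ) :
    Matrix (Fin (p ^ r)) (Fin (p ^ r)) ℂ :=
  proj (psi (p ^ r) (p ^ t.1) (p ^ (r - t.1)) t.2.1 t.2.2)

section levelProj

variable {p r : ℕ}

lemma mem_levelIndex {t : Σ _ : ℕ, ℕ × ℕ} :
    t ∈ levelIndex p r ↔ t.1 ≤ r ∧ t.2.1 < p ^ (r - t.1) ∧ t.2.2 < p ^ t.1 := by
  simp [levelIndex]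

lemma KD_levelProj {t : Σ _ : ℕ, ℕ × ℕ} (ht : t ∈ levelIndex p r) (i j : Fin (p ^ r)) :
    KD (levelProj p r t) i j =
      if (i : ℕ) % p ^ (r - t.1) = t.2.1 ∧ (j : ℕ) % p ^ t.1 = t.2.2 then
        1 / ((p ^ r : ℕ) : ℂ)
      else 0 := by
  obtain ⟨ha, hm, hs⟩ := mem_levelIndex.mp ht
  exact KD_proj_psi (pow_mul_pow_sub p ha) hm hs i j

lemma trace_levelProj {t : Σ _ : ℕ, ℕ × ℕ} (ht : t ∈ levelIndex p r) :
    (levelProj p r t).trace = 1 := by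
  obtain ⟨ha, hm, hs⟩ := mem_levelIndex.mp ht
  exact trace_proj_psi (pow_mul_pow_sub p ha) hm hs

lemma pureKD_prime_pow_eq_image (hp : p.Prime) :
    pureKD (p ^ r) = levelProj p r '' levelIndex p r := by
  ext M
  constructor
  · rintro ⟨x, y, m, s, hxy, hm, hs, rfl⟩
    obtain ⟨a, ha, rfl⟩ := (Nat.dvd_prime_pow hp).mp (Dvd.intro y hxy)
    obtain rfl : y = p ^ (r - a) :=
      Nat.eq_of_mul_eq_mul_left (pow_pos hp.pos a) (hxy.trans (pow_mul_pow_sub p ha).symm)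
    exact ⟨⟨a, m, s⟩, mem_levelIndex.mpr ⟨ha, hm, hs⟩, rfl⟩
  · rintro ⟨t, ht, rfl⟩
    obtain ⟨ha, hm, hs⟩ := mem_levelIndex.mp ht
    exact ⟨_, _, _, _, pow_mul_pow_sub p ha, hm, hs, rfl⟩

lemma exists_sum_levelProj_eq_of_mem_span (hp : p.Prime)
    {ρ : Matrix (Fin (p ^ r)) (Fin (p ^ r)) ℂ} (hρ : ρ ∈ Submodule.span ℝ (pureKD (p ^ r))) :
    ∃ w : (Σ _ : ℕ, ℕ × ℕ) → ℝ, ∑ t ∈ levelIndex p r, w t • levelProj p r t = ρ := by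
  rw [pureKD_prime_pow_eq_image hp, Finsupp.mem_span_image_iff_linearCombination] at hρ
  obtain ⟨l, hl, rfl⟩ := hρ
  rw [Finsupp.linearCombination_apply]
  exact ⟨l, (Finsupp.sum_of_support_subset l (coe_subset.mp ((Finsupp.mem_supported ℝ l).mp hl))
    (fun t c => c • levelProj p r t) fun _ _ => zero_smul _ _).symm⟩

lemma KD_sum_levelProj (hp : 0 < p) (w : (Σ _ : ℕ, ℕ × ℕ) → ℝ) (i j : Fin (p ^ r)) :
    KD (∑ t ∈ levelIndex p r, w t • levelProj p r t) i j =
      ((levelSum p r (fun a m s => w ⟨a, m, s⟩) i j / (p ^ r : ℕ) : ℝ) : ℂ) := by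
  rw [KD_sum_smul, sum_congr rfl fun t ht => by rw [KD_levelProj ht], levelIndex, sum_sigma,
    levelSum, Complex.ofReal_div, Complex.ofReal_sum, sum_div]
  refine sum_congr rfl fun a ha => ?_
  rw [sum_eq_single_of_mem ((i : ℕ) % p ^ (r - a), (j : ℕ) % p ^ a)]
  · simp [div_eq_mul_inv]
  · exact mem_product.mpr ⟨mem_range.mpr (Nat.mod_lt _ (by positivity)),
      mem_range.mpr (Nat.mod_lt _ (by positivity))⟩
  · rintro ⟨m, s⟩ - hne
    rw [if_neg fun h => hne (Prod.ext h.1.symm h.2.symm), smul_zero]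

lemma trace_sum_levelProj (w : (Σ _ : ℕ, ℕ × ℕ) → ℝ) :
    (∑ t ∈ levelIndex p r, w t • levelProj p r t).trace =
      ((∑ t ∈ levelIndex p r, w t : ℝ) : ℂ) := by
  rw [Matrix.trace_sum, Complex.ofReal_sum]
  refine sum_congr rfl fun t ht => ?_
  rw [Matrix.trace_smul, trace_levelProj ht, Complex.real_smul, mul_one]

end levelProj

def kdClassicalStates (d : ℕ) : Set (Matrix (Fin d) (Fin d) ℂ) :=
  {ρ | ρ.PosSemidef ∧ ρ.trace = 1 ∧ ∀ i j, 0 ≤ KD ρ i j}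

lemma convex_kdClassicalStates (d : ℕ) : Convex ℝ (kdClassicalStates d) := by
  rintro ρ ⟨hρ, htrρ, hKDρ⟩ σ ⟨hσ, htrσ, hKDσ⟩ a b ha hb hab
  refine ⟨(hρ.smul ha).add (hσ.smul hb), ?_, fun i j => ?_⟩
  · rw [Matrix.trace_add, Matrix.trace_smul, Matrix.trace_smul, htrρ, htrσ, Complex.real_smul,
      Complex.real_smul, mul_one, mul_one, ← Complex.ofReal_add, hab, Complex.ofReal_one]
  · rw [KD_add_smul]
    exact add_nonneg (smul_nonneg ha (hKDρ i j)) (smul_nonneg hb (hKDσ i j))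

lemma pureKD_subset_kdClassicalStates (d : ℕ) : pureKD d ⊆ kdClassicalStates d := by
  rintro _ ⟨x, y, m, s, hxy, hm, hs, rfl⟩
  refine ⟨posSemidef_proj _, trace_proj_psi hxy hm hs, fun i j => ?_⟩
  rw [KD_proj_psi hxy hm hs]
  split_ifs
  · exact one_div_nonneg.mpr (Nat.cast_nonneg d)
  · exact le_rfl

lemma mem_convexHull_pureKD_of_mem_span {p r : ℕ} (hp : p.Prime)
    {ρ : Matrix (Fin (p ^ r)) (Fin (p ^ r)) ℂ} (htr : ρ.trace = 1) (hKD : ∀ i j, 0 ≤ KD ρ i j)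
    (hρ : ρ ∈ Submodule.span ℝ (pureKD (p ^ r))) : ρ ∈ convexHull ℝ (pureKD (p ^ r)) := by
  obtain ⟨w, rfl⟩ := exists_sum_levelProj_eq_of_mem_span hp hρ
  have hpr : 0 < p ^ r := pow_pos hp.pos r
  have hlevel : ∀ i j, 0 ≤ levelSum p r (fun a m s => w ⟨a, m, s⟩) i j := by
    intro i j
    have := hKD ⟨i % p ^ r, Nat.mod_lt i hpr⟩ ⟨j % p ^ r, Nat.mod_lt j hpr⟩
    rwa [KD_sum_levelProj hp.pos, Complex.zero_le_real, le_div_iff₀ (by exact_mod_cast hpr),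
      zero_mul, ← levelSum_mod] at this
  obtain ⟨g', hg'0, hg'⟩ := exists_nonneg_levelSum_eq hp.one_lt r _ hlevel
  let w' : (Σ _ : ℕ, ℕ × ℕ) → ℝ := fun t => g' t.1 t.2.1 t.2.2
  have hw' : ∑ t ∈ levelIndex p r, w' t • levelProj p r t =
      ∑ t ∈ levelIndex p r, w t • levelProj p r t :=
    eq_of_forall_KD_eq fun i j => by rw [KD_sum_levelProj hp.pos, KD_sum_levelProj hp.pos, hg']
  have hsum : ∑ t ∈ levelIndex p r, w' t = 1 := by
    rw [← hw', trace_sum_levelProj] at htr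
    exact_mod_cast htr
  rw [← hw', pureKD_prime_pow_eq_image hp]
  exact (convex_convexHull ℝ _).sum_mem (fun t _ => hg'0 _ _ _) hsum
    fun t ht => subset_convexHull ℝ _ (Set.mem_image_of_mem _ ht)

theorem kd_classical_inter_span_eq_convexHull_general (p r : ℕ) (hp : p.Prime) :
    {ρ : Matrix (Fin (p ^ r)) (Fin (p ^ r)) ℂ |
        ρ.PosSemidef ∧ ρ.trace = 1 ∧ ∀ i j, 0 ≤ KD ρ i j}
      ∩ (Submodule.span ℝ (pureKD (p ^ r)) : Set (Matrix (Fin (p ^ r)) (Fin (p ^ r)) ℂ))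
    = convexHull ℝ (pureKD (p ^ r)) := by
  change kdClassicalStates (p ^ r) ∩ _ = _
  refine Set.Subset.antisymm ?_ ?_
  · rintro ρ ⟨⟨-, htr, hKD⟩, hρ⟩
    exact mem_convexHull_pureKD_of_mem_span hp htr hKD hρ
  · refine convexHull_min (fun M hM => ⟨pureKD_subset_kdClassicalStates _ hM,
      Submodule.subset_span hM⟩) ?_
    exact (convex_kdClassicalStates _).inter (Submodule.convex _)

/-- Lemma 2: for d = p^r, the KD-classical states lying in the real span of
    the KD-classical pure-state projections are exactly the convex hull of those
    projections. -/
theorem kd_classical_inter_span_eq_convexHull (p r : ℕ) (hp : p.Prime) (hr : 0 < r) :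
    {ρ : Matrix (Fin (p ^ r)) (Fin (p ^ r)) ℂ |
        ρ.PosSemidef ∧ ρ.trace = 1 ∧ ∀ i j, 0 ≤ KD ρ i j}
      ∩ (Submodule.span ℝ (pureKD (p ^ r)) : Set (Matrix (Fin (p ^ r)) (Fin (p ^ r)) ℂ))
    = convexHull ℝ (pureKD (p ^ r)) :=
  kd_classical_inter_span_eq_convexHull_general p r hp
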